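/- arXiv:math/0208038 — 4 statements merged into one kernel-verified Lean document; each statement's English description precedes it below -/
import Mathlib

section
/- Let E: y² = x³ + ax + b over a field of characteristic not 2,3, and let P = (x₁,y₁), Q = (x₂,y₂) be points on E with x₁ ≠ x₂. Set λ₁ = (y₂-y₁)/(x₂-x₁), x₃ = λ₁² - x₁ - x₂, and assume x₃ ≠ x₁. Define λ₂ = -λ₁ - 2y₁/(x₃-x₁), x₄ = λ₂² - x₁ - x₃, y₄ = (x₁-x₄)λ₂ - y₁. Then (x₄,y₄) = 2P + Q in the group law of E. -/
private lemma some_eq_some {K : Type*} [Field K] {W : WeierstrassCurve.Affine K}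
    {x y x' y' : K} (hx : x = x') (hy : y = y')
    {h : W.Nonsingular x y} {h' : W.Nonsingular x' y'} :
    WeierstrassCurve.Affine.Point.some x y h = WeierstrassCurve.Affine.Point.some x' y' h' := by
  subst hx hy; rfl

open Classical in
/-- The double-add formulas, which omit the `y`-coordinate of `P + Q`, correctly
compute `2P + Q` in the group law of the short Weierstrass curve `y² = x³ + ax + b`. -/
theorem stmt_1 {K : Type*} [Field K] (hchar2 : (2 : K) ≠ 0) (hchar3 : (3 : K) ≠ 0)
    (a b : K) (hΔ : 4 * a ^ 3 + 27 * b ^ 2 ≠ 0)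
    (W : WeierstrassCurve.Affine K)
    (hW : W = { a₁ := 0, a₂ := 0, a₃ := 0, a₄ := a, a₆ := b })
    (x₁ y₁ x₂ y₂ : K)
    (hP : W.Nonsingular x₁ y₁) (hQ : W.Nonsingular x₂ y₂)
    (hx : x₁ ≠ x₂)
    (lam₁ x₃ lam₂ x₄ y₄ : K)
    (hlam₁ : lam₁ = (y₂ - y₁) / (x₂ - x₁))
    (hx₃ : x₃ = lam₁ ^ 2 - x₁ - x₂)
    (hx₃x₁ : x₃ ≠ x₁)
    (hlam₂ : lam₂ = -lam₁ - 2 * y₁ / (x₃ - x₁))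
    (hx₄ : x₄ = lam₂ ^ 2 - x₁ - x₃)
    (hy₄ : y₄ = (x₁ - x₄) * lam₂ - y₁) :
    ∃ h₄ : W.Nonsingular x₄ y₄,
      2 • WeierstrassCurve.Affine.Point.some x₁ y₁ hP + WeierstrassCurve.Affine.Point.some x₂ y₂ hQ =
        WeierstrassCurve.Affine.Point.some x₄ y₄ h₄ := by
  have ha₁ : W.a₁ = 0 := by rw [hW]
  have ha₂ : W.a₂ = 0 := by rw [hW]
  have ha₃ : W.a₃ = 0 := by rw [hW]
  have hx21 : x₂ - x₁ ≠ 0 := sub_ne_zero.mpr (Ne.symm hx)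
  have hx31 : x₃ - x₁ ≠ 0 := sub_ne_zero.mpr hx₃x₁
  have hx13 : x₁ - x₃ ≠ 0 := sub_ne_zero.mpr (Ne.symm hx₃x₁)
  have hne : x₁ ≠ x₃ := Ne.symm hx₃x₁
  have hL₁ : W.slope x₁ x₂ y₁ y₂ = lam₁ := by
    rw [WeierstrassCurve.Affine.slope_of_X_ne hx, hlam₁,
      ← neg_sub y₂, ← neg_sub x₂, neg_div_neg_eq]
  have hX3 : W.addX x₁ x₂ (W.slope x₁ x₂ y₁ y₂) = x₃ := by
    rw [WeierstrassCurve.Affine.addX, hL₁, ha₁, ha₂, hx₃]; ring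
  have hY3 : W.addY x₁ x₂ y₁ (W.slope x₁ x₂ y₁ y₂) =
      -(lam₁ * (x₃ - x₁)) - y₁ := by
    rw [WeierstrassCurve.Affine.addY, WeierstrassCurve.Affine.negAddY,
      WeierstrassCurve.Affine.negY, hX3, hL₁, ha₁, ha₃]; ring
  have hR := WeierstrassCurve.Affine.nonsingular_add hP hQ (fun h => (hx h.1).elim)
  have hR' : W.Nonsingular x₃ (-(lam₁ * (x₃ - x₁)) - y₁) := by
    rw [hY3, hX3] at hR; exact hR
  have step1 : WeierstrassCurve.Affine.Point.some _ _ hP + WeierstrassCurve.Affine.Point.some _ _ hQ =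
      WeierstrassCurve.Affine.Point.some _ _ hR' :=
    (WeierstrassCurve.Affine.Point.add_of_X_ne hx).trans (some_eq_some hX3 hY3)
  have hL₂ : W.slope x₁ x₃ y₁ (-(lam₁ * (x₃ - x₁)) - y₁) = lam₂ := by
    rw [WeierstrassCurve.Affine.slope_of_X_ne hne, hlam₂]
    field_simp
    ring
  have hX4 : W.addX x₁ x₃ (W.slope x₁ x₃ y₁ (-(lam₁ * (x₃ - x₁)) - y₁)) = x₄ := by
    rw [WeierstrassCurve.Affine.addX, hL₂, ha₁, ha₂, hx₄]; ring
  have hY4 : W.addY x₁ x₃ y₁ (W.slope x₁ x₃ y₁ (-(lam₁ * (x₃ - x₁)) - y₁)) = y₄ := by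
    rw [WeierstrassCurve.Affine.addY, WeierstrassCurve.Affine.negAddY,
      WeierstrassCurve.Affine.negY, hX4, hL₂, ha₁, ha₃, hy₄]; ring
  have H := WeierstrassCurve.Affine.nonsingular_add hP hR' (fun h => (hne h.1).elim)
  rw [hY4, hX4] at H
  refine ⟨H, ?_⟩
  rw [two_nsmul, add_assoc, step1, WeierstrassCurve.Affine.Point.add_of_X_ne hne]
  exact some_eq_some hX4 hY4
end

section
/- Let E: y² = x³ + ax + b over a field of characteristic ≠ 2,3, with points R=(x₁,y₁), S=(x₂,y₂), x₁ ≠ x₂, R+S = (x₃,y₃), x₃ ≠ x₁, and slopes λ₁, λ₂ as in the double-add construction. Then as functions on E (using y² = x³ + ax + b to eliminate y²), the rational function [(y + y₃ - λ₁(x-x₃))(y - y₃ - λ₂(x-x₃))] / (x - x₃) equals the polynomial x² + (x₃ + λ₁λ₂)x - (λ₁+λ₂)y + c for some constant c ∈ K. -/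
/-- As functions on the curve `y² = x³ + ax + b` (eliminating `y²` via the curve
equation), the quotient `[(y + y₃ - λ₁(x - x₃))(y - y₃ - λ₂(x - x₃))]/(x - x₃)` equals the
polynomial `x² + (x₃ + λ₁λ₂)x - (λ₁ + λ₂)y + c` for some constant `c`: concretely, there is a
constant `c` such that the difference, after clearing the denominator `x - x₃`, is exactly the
curve relation `y² - (x³ + ax + b)`. -/
theorem stmt_6 {K : Type*} [Field K] (hchar2 : (2 : K) ≠ 0) (hchar3 : (3 : K) ≠ 0)
    (a b x₁ y₁ x₂ y₂ : K)
    (hΔ : 4 * a ^ 3 + 27 * b ^ 2 ≠ 0)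
    (hR : y₁ ^ 2 = x₁ ^ 3 + a * x₁ + b)
    (hS : y₂ ^ 2 = x₂ ^ 3 + a * x₂ + b)
    (hx : x₁ ≠ x₂)
    (lam₁ x₃ y₃ lam₂ : K)
    (hlam₁ : lam₁ = (y₂ - y₁) / (x₂ - x₁))
    (hx₃ : x₃ = lam₁ ^ 2 - x₁ - x₂)
    (hy₃ : y₃ = (x₁ - x₃) * lam₁ - y₁)
    (hx₃x₁ : x₃ ≠ x₁)
    (hlam₂ : lam₂ = -lam₁ - 2 * y₁ / (x₃ - x₁)) :
    ∃ c : K, ∀ x y : K,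
      (y + y₃ - lam₁ * (x - x₃)) * (y - y₃ - lam₂ * (x - x₃)) -
        (x - x₃) * (x ^ 2 + (x₃ + lam₁ * lam₂) * x - (lam₁ + lam₂) * y + c) =
      y ^ 2 - (x ^ 3 + a * x + b) := by
  have hd : x₂ - x₁ ≠ 0 := sub_ne_zero.mpr (Ne.symm hx)
  have hl : lam₁ * (x₂ - x₁) = y₂ - y₁ := by
    rw [hlam₁]; field_simp
  have hT : y₃ ^ 2 = x₃ ^ 3 + a * x₃ + b := by
    subst hx₃; subst hy₃
    have hd' : x₁ - x₂ ≠ 0 := sub_ne_zero.mpr hx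
    apply mul_left_cancel₀ hd'
    linear_combination (lam₁ ^ 2 - x₁ - x₂ - x₂) * hR -
      (lam₁ ^ 2 - x₁ - x₂ - x₁) * hS -
      (lam₁ ^ 2 - x₁ - x₂ - x₁) * (lam₁ * (x₂ - x₁) + y₁ + y₂) * hl
  refine ⟨a + (lam₁ - lam₂) * y₃ - lam₁ * lam₂ * x₃ + x₃ ^ 2, fun x y => ?_⟩
  linear_combination -hT
end

section
/- Let E: y² = x³ + ax + b over a field of characteristic ≠ 2,3 and let R=(x₁,y₁), S=(x₂,y₂) be as in the double-add construction with x₁ ≠ x₂ and x₃ ≠ x₁. The polynomial (x - x₁)(x + x₁ + x₃ + λ₁λ₂) - (λ₁+λ₂)(y - y₁), regarded as a function on E, has divisor (R) + (R) + (S) + (-2R-S) - 4(O), i.e., it equals g_{R,S}·g_{R+S,R}/g_{R+S} where g_{R,S} is the line through R and S, g_{R+S,R} the line through R+S and R, and g_{R+S} the vertical line through R+S. -/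
/-- The parabola `(x - x₁)(x + x₁ + x₃ + λ₁λ₂) - (λ₁ + λ₂)(y - y₁)` equals
`g_{R,S} · g_{R+S,R} / g_{R+S}` as a function on the curve `y² = x³ + ax + b` (so it has divisor
`(R) + (R) + (S) + (-2R - S) - 4(O)`): concretely, the parabola times the vertical line `x - x₃`
equals the product of the line `g_{R,S}` through `R` and `S` and the line `g_{R+S,R}` through
`R + S` and `R`, modulo the curve relation `y² - (x³ + ax + b)`. -/
theorem stmt_7 {K : Type*} [Field K] (hchar2 : (2 : K) ≠ 0) (hchar3 : (3 : K) ≠ 0)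
    (a b x₁ y₁ x₂ y₂ : K)
    (hΔ : 4 * a ^ 3 + 27 * b ^ 2 ≠ 0)
    (hR : y₁ ^ 2 = x₁ ^ 3 + a * x₁ + b)
    (hS : y₂ ^ 2 = x₂ ^ 3 + a * x₂ + b)
    (hx : x₁ ≠ x₂)
    (lam₁ x₃ y₃ lam₂ : K)
    (hlam₁ : lam₁ = (y₂ - y₁) / (x₂ - x₁))
    (hx₃ : x₃ = lam₁ ^ 2 - x₁ - x₂)
    (hy₃ : y₃ = (x₁ - x₃) * lam₁ - y₁)
    (hx₃x₁ : x₃ ≠ x₁)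
    (hlam₂ : lam₂ = -lam₁ - 2 * y₁ / (x₃ - x₁)) :
    ∀ x y : K,
      ((x - x₁) * (x + x₁ + x₃ + lam₁ * lam₂) - (lam₁ + lam₂) * (y - y₁)) * (x - x₃) =
        (y - y₁ - lam₁ * (x - x₁)) * (y - y₃ - lam₂ * (x - x₃)) -
          (y ^ 2 - (x ^ 3 + a * x + b)) := by
  intro x y
  have hl : lam₁ * (x₂ - x₁) = y₂ - y₁ := by
    rw [hlam₁]; field_simp [sub_ne_zero.mpr (Ne.symm hx)]
  subst hx₃ hy₃
  apply mul_right_cancel₀ (sub_ne_zero.mpr (Ne.symm hx))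
  linear_combination (x₂ - x) * hR + (x - x₁) * hS +
    (x - x₁) * (y₂ + y₁ + lam₁ * (x₂ - x₁)) * hl
end

section
/- Let E be an elliptic curve, P a point, and f_b, f_c functions with divisors b(P) - (bP) - (b-1)(O) and c(P) - (cP) - (c-1)(O) respectively. Then f_b² · f_c · (g_{b,c} · g_{b+c,b}) / (g_{b+c} · g_{2b+c}) has divisor (2b+c)(P) - ((2b+c)P) - (2b+c-1)(O), so f_{2b+c} can be computed as f_b² · f_c · parab / g_{2b+c} where parab = g_{b,c}·g_{b+c,b}/g_{b+c} is the parabola through bP, bP, cP, -(2b+c)P. -/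
set_option maxHeartbeats 1600000


open Finsupp Classical in
/-- the combined double-add step for Miller functions. If `f_b`, `f_c` have
divisors `b(P) - (bP) - (b-1)(O)` and `c(P) - (cP) - (c-1)(O)`, then
`f_b² · f_c · (g_{b,c} · g_{b+c,b}) / (g_{b+c} · g_{2b+c})` has divisor
`(2b+c)(P) - ((2b+c)P) - (2b+c-1)(O)`, where `g_{b,c}` is the line through `bP` and `cP`,
`g_{b+c,b}` the line through `(b+c)P` and `bP`, and `g_n` the vertical line through `nP`. -/
theorem stmt_10 {K : Type*} [Field K] (W : WeierstrassCurve.Affine K) (hΔ : W.Δ ≠ 0)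
    {F : Type*} [Field F] (D : F → (W.Point →₀ ℤ))
    (hDmul : ∀ u v : F, u ≠ 0 → v ≠ 0 → D (u * v) = D u + D v)
    (hDdiv : ∀ u v : F, u ≠ 0 → v ≠ 0 → D (u / v) = D u - D v)
    (P : W.Point) (b c : ℕ) (hb : 1 ≤ b) (hc : 1 ≤ c)
    (fb fc gbc gbcb gbpc g2bpc : F)
    (hfb0 : fb ≠ 0) (hfc0 : fc ≠ 0) (hgbc0 : gbc ≠ 0) (hgbcb0 : gbcb ≠ 0)
    (hgbpc0 : gbpc ≠ 0) (hg2bpc0 : g2bpc ≠ 0)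
    (hfb : D fb = single P (b : ℤ) - single (b • P) 1 - single 0 ((b : ℤ) - 1))
    (hfc : D fc = single P (c : ℤ) - single (c • P) 1 - single 0 ((c : ℤ) - 1))
    (hgbc : D gbc =
      single (b • P) 1 + single (c • P) 1 + single (-((b + c) • P)) 1 - single 0 3)
    (hgbcb : D gbcb =
      single ((b + c) • P) 1 + single (b • P) 1 + single (-((2 * b + c) • P)) 1 - single 0 3)
    (hgbpc : D gbpc = single ((b + c) • P) 1 + single (-((b + c) • P)) 1 - single 0 2)
    (hg2bpc : D g2bpc =
      single ((2 * b + c) • P) 1 + single (-((2 * b + c) • P)) 1 - single 0 2) :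
    D (fb ^ 2 * fc * (gbc * gbcb) / (gbpc * g2bpc)) =
      single P (2 * (b : ℤ) + c) - single ((2 * b + c) • P) 1 -
        single 0 (2 * (b : ℤ) + c - 1) := by
  have h1 : fb ^ 2 = fb * fb := sq fb
  rw [hDdiv _ _ (mul_ne_zero (mul_ne_zero (pow_ne_zero 2 hfb0) hfc0) (mul_ne_zero hgbc0 hgbcb0)) (mul_ne_zero hgbpc0 hg2bpc0),
    hDmul _ _ (mul_ne_zero (pow_ne_zero 2 hfb0) hfc0) (mul_ne_zero hgbc0 hgbcb0),
    hDmul _ _ (pow_ne_zero 2 hfb0) hfc0, h1, hDmul _ _ hfb0 hfb0,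
    hDmul _ _ hgbc0 hgbcb0, hDmul _ _ hgbpc0 hg2bpc0,
    hfb, hfc, hgbc, hgbcb, hgbpc, hg2bpc]
  classical
  ext Q
  simp only [Finsupp.add_apply, Finsupp.sub_apply, Finsupp.single_apply]
  split_ifs <;> ring
end
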